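/- arXiv:2403.08709 — 4 statements merged into one kernel-verified Lean document; each statement's English description precedes it below -/
import Mathlib

section
/- For all natural numbers M, N, j, k with 1 ≤ N and j ≤ k ≤ N, one has k^j ≤ B^j · N^((k−M)⁺), where B = max(M, 3) and (k−M)⁺ denotes truncated subtraction max(k−M, 0). -/
/-! Write `k = M + d` with `d = (k - M)⁺`. If `j < d`, then `k ^ j ≤ N ^ j ≤ N ^ d`. Otherwise
`j = e + d` with `e ≤ M`, so `k ^ j ≤ (M + d) ^ e * N ^ d`, and since `(1 + 1/m) ^ m ≤ exp 1 < 3`,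
each unit added to `M` costs at most a factor `3` in `(M + d) ^ e`: `(M + d) ^ e ≤ M ^ e * 3 ^ d`. -/

lemma Nat.succ_pow_le_three_mul_pow {n e : ℕ} (he : e ≤ n) : (n + 1) ^ e ≤ 3 * n ^ e := by
  rcases n.eq_zero_or_pos with rfl | hn
  · simp [Nat.le_zero.mp he]
  have hfactor : (1 + (n : ℝ)⁻¹) ^ e ≤ 3 :=
    calc (1 + (n : ℝ)⁻¹) ^ e ≤ (1 + (n : ℝ)⁻¹) ^ n :=
          pow_le_pow_right₀ (le_add_of_nonneg_right (by positivity)) he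
      _ ≤ Real.exp 1 := Real.one_add_inv_pow_le_exp
      _ ≤ 3 := Real.exp_one_lt_three.le
  have hsplit : ((n : ℝ) + 1) ^ e = (1 + (n : ℝ)⁻¹) ^ e * (n : ℝ) ^ e := by
    rw [← mul_pow]; field_simp
  have hreal : ((n : ℝ) + 1) ^ e ≤ 3 * (n : ℝ) ^ e := by
    rw [hsplit]; gcongr
  exact_mod_cast hreal

lemma Nat.add_pow_le_pow_mul_three_pow {n e : ℕ} (he : e ≤ n) (d : ℕ) :
    (n + d) ^ e ≤ n ^ e * 3 ^ d := by
  induction d with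
  | zero => simp
  | succ d ih =>
    calc (n + (d + 1)) ^ e = (n + d + 1) ^ e := by rw [add_assoc]
      _ ≤ 3 * (n + d) ^ e := Nat.succ_pow_le_three_mul_pow (he.trans (le_add_right n d))
      _ ≤ 3 * (n ^ e * 3 ^ d) := Nat.mul_le_mul_left 3 ih
      _ = n ^ e * 3 ^ (d + 1) := by ring

theorem pow_le_max_pow_mul_pow_truncSub_general (M N j k : ℕ)
    (hjk : j ≤ k) (hkN : k ≤ N) :
    k ^ j ≤ (max M 3) ^ j * N ^ (k - M) := by
  set B := max M 3
  set d := k - M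
  rcases lt_or_ge j d with hjd | hdj
  · have hN : 1 ≤ N := by omega
    calc k ^ j ≤ N ^ j := Nat.pow_le_pow_left hkN j
      _ ≤ N ^ d := Nat.pow_le_pow_right hN hjd.le
      _ ≤ B ^ j * N ^ d := Nat.le_mul_of_pos_left _ (by positivity)
  · obtain ⟨e, rfl⟩ : ∃ e, j = e + d := ⟨j - d, by omega⟩
    have heM : e ≤ M := by omega
    calc k ^ (e + d) = k ^ e * k ^ d := pow_add k e d
      _ ≤ (M + d) ^ e * N ^ d := by gcongr; omega
      _ ≤ (M ^ e * 3 ^ d) * N ^ d := by gcongr; exact Nat.add_pow_le_pow_mul_three_pow heM d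
      _ ≤ (B ^ e * B ^ d) * N ^ d := by gcongr <;> simp [B]
      _ = B ^ (e + d) * N ^ d := by rw [pow_add]

/-- For all natural numbers `M, N, j, k` with `1 ≤ N` and `j ≤ k ≤ N`, one has
`k^j ≤ B^j * N^((k−M)⁺)` where `B = max M 3` and `(k−M)⁺` is truncated subtraction. -/
theorem pow_le_max_pow_mul_pow_truncSub (M N j k : ℕ) (hN : 1 ≤ N)
    (hjk : j ≤ k) (hkN : k ≤ N) :
    k ^ j ≤ (max M 3) ^ j * N ^ (k - M) :=
  pow_le_max_pow_mul_pow_truncSub_general M N j k hjk hkN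
end

section
/- For all real numbers M, x, N with 3 ≤ M ≤ x ≤ N, one has x·(log x − log M) ≤ (x − M)·log N. -/
open Real

/-- `log t / t` is antitone on `[e, ∞)`. -/
lemma mul_log_le_mul_log_of_exp_one_le {M x : ℝ} (hM : exp 1 ≤ M) (hMx : M ≤ x) :
    M * log x ≤ x * log M := by
  have hM0 : 0 < M := (exp_pos 1).trans_le hM
  have hx0 : 0 < x := hM0.trans_le hMx
  have h := log_div_self_antitoneOn (by simpa using hM) (by simpa using hM.trans hMx) hMx
  rwa [div_le_div_iff₀ hx0 hM0, mul_comm (log x), mul_comm (log M)] at h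

/-- For all real numbers `M, x, N` with `3 ≤ M ≤ x ≤ N`, one has
`x·(log x − log M) ≤ (x − M)·log N`. -/
theorem mul_log_sub_log_le (M x N : ℝ) (hM : 3 ≤ M) (hMx : M ≤ x) (hxN : x ≤ N) :
    x * (Real.log x - Real.log M) ≤ (x - M) * Real.log N := by
  have he : exp 1 ≤ M := exp_one_lt_d9.le.trans (by linarith)
  have hx0 : 0 < x := by linarith
  calc x * (log x - log M) ≤ x * log x - M * log x := by
        linarith [mul_log_le_mul_log_of_exp_one_le he hMx]
    _ = (x - M) * log x := by ring
    _ ≤ (x - M) * log N := by gcongr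
end

section
/- Let ã_{ℓ,j} : ℝⁿ → ℝ (1 ≤ ℓ ≤ n, 1 ≤ j ≤ m) be C^∞, and define the symbols X_j(x, ξ) = ∑_{ℓ=1}^{n} ã_{ℓ,j}(x)·ξ_ℓ and p⁰(x, ξ) = ∑_{j=1}^{m} X_j(x, ξ)². Define the family 𝒫 = (p¹, …, p^{2n}) by p^k(x, ξ) = ∂_{ξ_k} p⁰(x, ξ) for 1 ≤ k ≤ n and p^{n+k}(x, ξ) = (1 + ‖ξ‖²)^{1/2} · ∂_{x_k} p⁰(x, ξ) for 1 ≤ k ≤ n. Then for every (x, ξ) ∈ ℝⁿ × (ℝⁿ \ {0}), τ((x, ξ); X) ≤ τ((x, ξ); 𝒫), where τ denotes the type (in ℕ ∪ {+∞}) of the respective family of symbols at (x, ξ). -/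
/-- Poisson bracket of functions on `ℝⁿ × ℝⁿ` in the variables `(x, ξ)`. -/
noncomputable def poissonBracket {n : ℕ}
    (q₁ q₂ : EuclideanSpace ℝ (Fin n) × EuclideanSpace ℝ (Fin n) → ℝ) :
    EuclideanSpace ℝ (Fin n) × EuclideanSpace ℝ (Fin n) → ℝ :=
  fun z => ∑ j : Fin n,
    (fderiv ℝ q₁ z (0, EuclideanSpace.single j 1) *
        fderiv ℝ q₂ z (EuclideanSpace.single j 1, 0) -
      fderiv ℝ q₁ z (EuclideanSpace.single j 1, 0) *
        fderiv ℝ q₂ z (0, EuclideanSpace.single j 1))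

/-- Iterated Poisson bracket `f^I` for the index sequence `I = (i, I₁, …, I_s)`:
`f^{(i)} = f_i` and `f^{(i₁,…,i_r)} = {f^{(i₁,…,i_{r−1})}, f_{i_r}}`. -/
noncomputable def iterBracket {n : ℕ} {S : Type*}
    (f : S → (EuclideanSpace ℝ (Fin n) × EuclideanSpace ℝ (Fin n) → ℝ))
    (i : S) (I : List S) :
    EuclideanSpace ℝ (Fin n) × EuclideanSpace ℝ (Fin n) → ℝ :=
  I.foldl (fun g j => poissonBracket g (f j)) (f i)

/-- The type `τ(z)` of a finite family of symbols at a point `z = (x, ξ)`: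
the infimum in `ℕ∞` of the lengths `|I|` of index sequences `I` with `f^I(z) ≠ 0`
(equal to `⊤ = +∞` if there is no such `I`). -/
noncomputable def familyType {n : ℕ} {S : Type*}
    (f : S → (EuclideanSpace ℝ (Fin n) × EuclideanSpace ℝ (Fin n) → ℝ))
    (z : EuclideanSpace ℝ (Fin n) × EuclideanSpace ℝ (Fin n)) : ℕ∞ :=
  sInf {m : ℕ∞ | ∃ (i : S) (I : List S),
    iterBracket f i I z ≠ 0 ∧ m = ((I.length + 1 : ℕ) : ℕ∞)}

section Aux

variable {n : ℕ}

local notation "Z" => EuclideanSpace ℝ (Fin n) × EuclideanSpace ℝ (Fin n)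

private lemma contDiff_fderiv_apply {E : Type*} [NormedAddCommGroup E] [NormedSpace ℝ E]
    {f : E → ℝ} (hf : ContDiff ℝ (⊤ : ℕ∞) f) (v : E) :
    ContDiff ℝ (⊤ : ℕ∞) (fun z => fderiv ℝ f z v) :=
  (hf.fderiv_right (by simp)).clm_apply contDiff_const

private lemma DAt {E : Type*} [NormedAddCommGroup E] [NormedSpace ℝ E]
    {f : E → ℝ} (hf : ContDiff ℝ (⊤ : ℕ∞) f) (z : E) : DifferentiableAt ℝ f z :=
  (hf.differentiable (by simp)).differentiableAt

private lemma poissonBracket_contDiff {f g : Z → ℝ}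
    (hf : ContDiff ℝ (⊤ : ℕ∞) f) (hg : ContDiff ℝ (⊤ : ℕ∞) g) :
    ContDiff ℝ (⊤ : ℕ∞) (poissonBracket f g) := by
  unfold poissonBracket
  exact ContDiff.sum fun j _ =>
    ((contDiff_fderiv_apply hf _).mul (contDiff_fderiv_apply hg _)).sub
      ((contDiff_fderiv_apply hf _).mul (contDiff_fderiv_apply hg _))

private lemma pb_zero_left (h : Z → ℝ) (z : Z) :
    poissonBracket (fun _ => (0:ℝ)) h z = 0 := by
  simp [poissonBracket]

private lemma pb_add_left {f g : Z → ℝ} {z : Z} (hf : DifferentiableAt ℝ f z)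
    (hg : DifferentiableAt ℝ g z) (h : Z → ℝ) :
    poissonBracket (fun w => f w + g w) h z = poissonBracket f h z + poissonBracket g h z := by
  simp only [poissonBracket, fderiv_fun_add hf hg, ContinuousLinearMap.add_apply,
    ← Finset.sum_add_distrib]
  exact Finset.sum_congr rfl fun j _ => by ring

private lemma pb_mul_left {c f : Z → ℝ} {z : Z} (hc : DifferentiableAt ℝ c z)
    (hf : DifferentiableAt ℝ f z) (h : Z → ℝ) :
    poissonBracket (fun w => c w * f w) h z
      = c z * poissonBracket f h z + f z * poissonBracket c h z := by
  simp only [poissonBracket, fderiv_fun_mul hc hf, ContinuousLinearMap.add_apply,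
    ContinuousLinearMap.smul_apply, smul_eq_mul, Finset.mul_sum, ← Finset.sum_add_distrib]
  exact Finset.sum_congr rfl fun j _ => by ring

private lemma pb_mul_right {c f : Z → ℝ} {z : Z} (hc : DifferentiableAt ℝ c z)
    (hf : DifferentiableAt ℝ f z) (h : Z → ℝ) :
    poissonBracket h (fun w => c w * f w) z
      = c z * poissonBracket h f z + f z * poissonBracket h c z := by
  simp only [poissonBracket, fderiv_fun_mul hc hf, ContinuousLinearMap.add_apply,
    ContinuousLinearMap.smul_apply, smul_eq_mul, Finset.mul_sum, ← Finset.sum_add_distrib]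
  exact Finset.sum_congr rfl fun j _ => by ring

private lemma pb_sum_right {ι : Type*} {z : Z} (s : Finset ι) (F : ι → Z → ℝ)
    (hF : ∀ j ∈ s, DifferentiableAt ℝ (F j) z) (g : Z → ℝ) :
    poissonBracket g (fun w => ∑ j ∈ s, F j w) z = ∑ j ∈ s, poissonBracket g (F j) z := by
  simp only [poissonBracket, fderiv_fun_sum hF, ContinuousLinearMap.sum_apply, Finset.mul_sum,
    ← Finset.sum_sub_distrib]
  rw [Finset.sum_comm]

private lemma iterBracket_append_single {S : Type*} (f : S → Z → ℝ) (i : S) (I : List S) (j : S) :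
    iterBracket f i (I ++ [j]) = poissonBracket (iterBracket f i I) (f j) := by
  simp [iterBracket, List.foldl_append]

private lemma iterBracket_contDiff {S : Type*} {f : S → Z → ℝ}
    (hf : ∀ i, ContDiff ℝ (⊤ : ℕ∞) (f i)) (i : S) (I : List S) :
    ContDiff ℝ (⊤ : ℕ∞) (iterBracket f i I) := by
  suffices h : ∀ (I : List S) (g : Z → ℝ), ContDiff ℝ (⊤ : ℕ∞) g →
      ContDiff ℝ (⊤ : ℕ∞) (I.foldl (fun g j => poissonBracket g (f j)) g) from h I (f i) (hf i)
  intro I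
  induction I with
  | nil => exact fun g hg => hg
  | cons j I ih => exact fun g hg => ih _ (poissonBracket_contDiff hg (hf j))

/-- Admissible combinations of iterated brackets of length `≤ r` with smooth coefficients. -/
inductive Adm {S : Type*} (f : S → Z → ℝ) : ℕ → (Z → ℝ) → Prop
  | basic (r : ℕ) (c : Z → ℝ) (i : S) (I : List S) (hc : ContDiff ℝ (⊤ : ℕ∞) c)
      (hI : I.length + 1 ≤ r) : Adm f r (fun z => c z * iterBracket f i I z)
  | zero (r : ℕ) : Adm f r (fun _ => 0)
  | add (r : ℕ) (g h : Z → ℝ) : Adm f r g → Adm f r h → Adm f r (fun z => g z + h z)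

private lemma adm_contDiff {S : Type*} {f : S → Z → ℝ} (hf : ∀ i, ContDiff ℝ (⊤ : ℕ∞) (f i))
    {r : ℕ} {g : Z → ℝ} (hg : Adm f r g) : ContDiff ℝ (⊤ : ℕ∞) g := by
  induction hg with
  | basic c i I hc hI => exact hc.mul (iterBracket_contDiff hf i I)
  | zero => exact contDiff_const
  | add g h hg hh ihg ihh => exact ihg.add ihh

private lemma adm_vanish {S : Type*} {f : S → Z → ℝ} {r : ℕ} {g : Z → ℝ} {z : Z}
    (hg : Adm f r g) (hz : ∀ (i : S) (I : List S), I.length + 1 ≤ r → iterBracket f i I z = 0) :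
    g z = 0 := by
  induction hg with
  | basic c i I hc hI => simp [hz i I hI]
  | zero => rfl
  | add g h hg hh ihg ihh => simp [ihg, ihh]

private lemma adm_finsetSum {S ι : Type*} {f : S → Z → ℝ} {r : ℕ} (s : Finset ι) (F : ι → Z → ℝ)
    (h : ∀ j ∈ s, Adm f r (F j)) : Adm f r (fun z => ∑ j ∈ s, F j z) := by
  classical
  induction s using Finset.cons_induction with
  | empty => simpa using Adm.zero (f := f) r
  | cons j s hj ih =>
    simp only [Finset.sum_cons]
    exact Adm.add r _ _ (h j (by simp)) (ih fun j' hj' => h j' (by simp [hj']))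

private lemma adm_bracket {S : Type*} {f : S → Z → ℝ} (hf : ∀ i, ContDiff ℝ (⊤ : ℕ∞) (f i))
    {r : ℕ} {g : Z → ℝ} (hg : Adm f r g) (c : Z → ℝ) (hc : ContDiff ℝ (⊤ : ℕ∞) c) (j : S) :
    Adm f (r + 1) (poissonBracket g (fun w => c w * f j w)) := by
  induction hg with
  | zero =>
    rw [show poissonBracket (fun _ => (0:ℝ)) (fun w => c w * f j w) = fun _ => (0:ℝ) from
      funext fun z => pb_zero_left _ z]
    exact Adm.zero _
  | add g₁ g₂ hg₁ hg₂ ih₁ ih₂ =>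
    rw [show poissonBracket (fun z => g₁ z + g₂ z) (fun w => c w * f j w)
        = fun z => poissonBracket g₁ (fun w => c w * f j w) z
            + poissonBracket g₂ (fun w => c w * f j w) z from
      funext fun z => pb_add_left (DAt (adm_contDiff hf hg₁) z) (DAt (adm_contDiff hf hg₂) z) _]
    exact Adm.add _ _ _ ih₁ ih₂
  | basic d i I hd hI =>
    have hu : ContDiff ℝ (⊤ : ℕ∞) (iterBracket f i I) := iterBracket_contDiff hf i I
    have key : poissonBracket (fun z => d z * iterBracket f i I z) (fun w => c w * f j w)
        = fun z => (fun z => c z * d z) z * iterBracket f i (I ++ [j]) z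
          + ((fun z => c z * poissonBracket d (f j) z) z * iterBracket f i I z
          + ((fun z => d z * poissonBracket (iterBracket f i I) c z) z * iterBracket f j [] z
          + (fun z => poissonBracket d c z * iterBracket f i I z) z * iterBracket f j [] z)) := by
      funext z
      rw [iterBracket_append_single]
      rw [pb_mul_right (DAt hc z) (DAt (hf j) z) _,
        pb_mul_left (DAt hd z) (DAt hu z) (f j),
        pb_mul_left (DAt hd z) (DAt hu z) c]
      simp only [iterBracket, List.foldl_nil]
      ring
    rw [key]
    refine Adm.add _ _ _ (Adm.basic _ _ i (I ++ [j]) (hc.mul hd) (by simp; omega)) ?_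
    refine Adm.add _ _ _
      (Adm.basic _ _ i I (hc.mul (poissonBracket_contDiff hd (hf j))) (by omega)) ?_
    exact Adm.add _ _ _
      (Adm.basic _ _ j [] (hd.mul (poissonBracket_contDiff hu hc)) (by simp))
      (Adm.basic _ _ j [] ((poissonBracket_contDiff hd hc).mul hu) (by simp))

end Aux

/-- For a sum of squares of first-order symbols `X_j(x,ξ) = ∑ₗ ãₗⱼ(x)ξₗ`, with
`p⁰ = ∑ⱼ Xⱼ²`, `pᵏ = ∂_{ξ_k} p⁰` and `p^{n+k} = (1+‖ξ‖²)^{1/2} ∂_{x_k} p⁰`, at every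
`(x,ξ)` with `ξ ≠ 0` one has `τ((x,ξ); X) ≤ τ((x,ξ); 𝒫)`. -/
theorem type_X_le_type_P
    (n m : ℕ) (a : Fin n → Fin m → EuclideanSpace ℝ (Fin n) → ℝ)
    (ha : ∀ ℓ j, ContDiff ℝ (⊤ : ℕ∞) (a ℓ j))
    (X : Fin m → (EuclideanSpace ℝ (Fin n) × EuclideanSpace ℝ (Fin n) → ℝ))
    (hX : ∀ j z, X j z = ∑ ℓ : Fin n, a ℓ j z.1 * z.2 ℓ)
    (p0 : EuclideanSpace ℝ (Fin n) × EuclideanSpace ℝ (Fin n) → ℝ)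
    (hp0 : ∀ z, p0 z = ∑ j : Fin m, (X j z) ^ 2)
    (P : Fin n ⊕ Fin n → (EuclideanSpace ℝ (Fin n) × EuclideanSpace ℝ (Fin n) → ℝ))
    (hPξ : ∀ k z, P (Sum.inl k) z = fderiv ℝ p0 z (0, EuclideanSpace.single k 1))
    (hPx : ∀ k z, P (Sum.inr k) z =
      Real.sqrt (1 + ‖z.2‖ ^ 2) * fderiv ℝ p0 z (EuclideanSpace.single k 1, 0)) :
    ∀ (x ξ : EuclideanSpace ℝ (Fin n)), ξ ≠ 0 →
      familyType X (x, ξ) ≤ familyType P (x, ξ) := by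
  -- smoothness of the X j
  have hXs : ∀ j, ContDiff ℝ (⊤ : ℕ∞) (X j) := by
    intro j
    rw [show X j = fun z => ∑ ℓ : Fin n, a ℓ j z.1 * z.2 ℓ from funext (hX j)]
    exact ContDiff.sum fun ℓ _ => ((ha ℓ j).comp contDiff_fst).mul
      ((EuclideanSpace.proj (𝕜 := ℝ) ℓ).contDiff.comp contDiff_snd)
  -- smoothness of the sqrt weight
  have hsq : ContDiff ℝ (⊤ : ℕ∞) (fun z : EuclideanSpace ℝ (Fin n) × EuclideanSpace ℝ (Fin n) =>
      Real.sqrt (1 + ‖z.2‖ ^ 2)) := by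
    refine contDiff_iff_contDiffAt.mpr fun z => ?_
    exact (Real.contDiffAt_sqrt (by positivity)).comp z
      ((contDiff_const.add ((contDiff_norm_sq ℝ).comp contDiff_snd)).contDiffAt)
  -- the derivative of p0
  have hfd : ∀ z v, fderiv ℝ p0 z v = ∑ j : Fin m, 2 * (X j z * fderiv ℝ (X j) z v) := by
    intro z v
    have hp0' : p0 = fun w => ∑ j : Fin m, X j w * X j w := by
      funext w; rw [hp0]; exact Finset.sum_congr rfl fun j _ => sq (X j w)
    rw [hp0', fderiv_fun_sum (A := fun j w => X j w * X j w) (fun j _ => (DAt (hXs j) z).mul (DAt (hXs j) z))]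
    simp only [ContinuousLinearMap.sum_apply]
    refine Finset.sum_congr rfl fun j _ => ?_
    rw [fderiv_fun_mul (DAt (hXs j) z) (DAt (hXs j) z)]
    simp only [ContinuousLinearMap.add_apply, ContinuousLinearMap.smul_apply, smul_eq_mul]
    ring
  -- decomposition of each P i as a smooth combination of the X j
  have hPdecomp : ∀ i, ∃ C : Fin m → (EuclideanSpace ℝ (Fin n) × EuclideanSpace ℝ (Fin n) → ℝ),
      (∀ j, ContDiff ℝ (⊤ : ℕ∞) (C j)) ∧ P i = fun w => ∑ j : Fin m, C j w * X j w := by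
    rintro (k | k)
    · refine ⟨fun j w => 2 * fderiv ℝ (X j) w (0, EuclideanSpace.single k 1),
        fun j => contDiff_const.mul (contDiff_fderiv_apply (hXs j) _), funext fun w => ?_⟩
      rw [hPξ k w, hfd]
      exact Finset.sum_congr rfl fun j _ => by ring
    · refine ⟨fun j w => Real.sqrt (1 + ‖w.2‖ ^ 2) *
          (2 * fderiv ℝ (X j) w (EuclideanSpace.single k 1, 0)),
        fun j => hsq.mul (contDiff_const.mul (contDiff_fderiv_apply (hXs j) _)),
        funext fun w => ?_⟩
      rw [hPx k w, hfd, Finset.mul_sum]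
      exact Finset.sum_congr rfl fun j _ => by ring
  -- bracketing an admissible function with P i
  have hPb : ∀ (r : ℕ) (g), Adm X r g → ∀ i,
      Adm X (r + 1) (poissonBracket g (P i)) := by
    intro r g hg i
    obtain ⟨C, hC, hPeq⟩ := hPdecomp i
    have hsum : poissonBracket g (P i)
        = fun z => ∑ j : Fin m, poissonBracket g (fun w => C j w * X j w) z := by
      rw [hPeq]
      exact funext fun z => pb_sum_right _ _ (fun j _ => DAt ((hC j).mul (hXs j)) z) g
    rw [hsum]
    exact adm_finsetSum _ _ fun j _ => adm_bracket hXs hg (C j) (hC j) j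
  -- every iterated bracket of the P's is admissible
  have hPAdm : ∀ (i : Fin n ⊕ Fin n) (I : List (Fin n ⊕ Fin n)),
      Adm X (I.length + 1) (iterBracket P i I) := by
    intro i I
    induction I using List.reverseRecOn with
    | nil =>
      obtain ⟨C, hC, hPeq⟩ := hPdecomp i
      have h0 : iterBracket P i [] = fun z => ∑ j : Fin m, C j z * X j z := hPeq
      rw [show ([] : List (Fin n ⊕ Fin n)).length + 1 = 1 from rfl, h0]
      exact adm_finsetSum _ _ fun j _ => Adm.basic 1 (C j) j [] (hC j) (by simp)
    | append_singleton I j ih =>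
      rw [iterBracket_append_single]
      have := hPb _ _ ih j
      simpa using this
  -- conclusion
  intro x ξ _
  refine le_sInf fun b hb => ?_
  obtain ⟨i, I, hne, rfl⟩ := hb
  have hA := hPAdm i I
  have hex : ∃ (i' : Fin m) (I' : List (Fin m)), I'.length + 1 ≤ I.length + 1 ∧
      iterBracket X i' I' (x, ξ) ≠ 0 := by
    by_contra hcon
    push_neg at hcon
    exact hne (adm_vanish hA fun i' I' hlen => hcon i' I' hlen)
  obtain ⟨i', I', hlen, hnz⟩ := hex
  calc familyType X (x, ξ) ≤ ((I'.length + 1 : ℕ) : ℕ∞) := sInf_le ⟨i', I', hnz, rfl⟩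
    _ ≤ ((I.length + 1 : ℕ) : ℕ∞) := by exact_mod_cast hlen
end

section
/- Let ã_{ℓ,j} : ℝⁿ → ℝ (1 ≤ ℓ ≤ n, 1 ≤ j ≤ m) be C^∞, define X_j(x, ξ) = ∑_{ℓ=1}^{n} ã_{ℓ,j}(x)·ξ_ℓ, p⁰(x, ξ) = ∑_{j=1}^{m} X_j(x, ξ)², and the family 𝒫 = (p¹, …, p^{2n}) by p^k = ∂_{ξ_k} p⁰ for 1 ≤ k ≤ n and p^{n+k}(x, ξ) = (1 + ‖ξ‖²)^{1/2} · ∂_{x_k} p⁰(x, ξ) for 1 ≤ k ≤ n. If (x, ξ) ∈ ℝⁿ × (ℝⁿ \ {0}) satisfies τ((x, ξ); X) ≤ 2, then τ((x, ξ); X) = τ((x, ξ); 𝒫). -/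
/-! ### Auxiliary lemmas on `familyType` -/

lemma familyType_eq_one {n : ℕ} {S : Type*}
    {f : S → (EuclideanSpace ℝ (Fin n) × EuclideanSpace ℝ (Fin n) → ℝ)}
    {z : EuclideanSpace ℝ (Fin n) × EuclideanSpace ℝ (Fin n)}
    (h : ∃ i : S, f i z ≠ 0) : familyType f z = 1 := by
  obtain ⟨i, hi⟩ := h
  refine le_antisymm (sInf_le ⟨i, [], hi, by norm_num⟩) (le_sInf ?_)
  rintro m ⟨i, I, hI, rfl⟩
  exact_mod_cast Nat.succ_le_succ (Nat.zero_le _)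

lemma familyType_ge_two {n : ℕ} {S : Type*}
    {f : S → (EuclideanSpace ℝ (Fin n) × EuclideanSpace ℝ (Fin n) → ℝ)}
    {z : EuclideanSpace ℝ (Fin n) × EuclideanSpace ℝ (Fin n)}
    (h : ∀ i : S, f i z = 0) : 2 ≤ familyType f z := by
  refine le_sInf ?_
  rintro m ⟨i, I, hI, rfl⟩
  cases I with
  | nil => exact absurd (h i) hI
  | cons a t =>
      simp only [List.length_cons]
      exact_mod_cast by omega

lemma familyType_eq_two {n : ℕ} {S : Type*}
    {f : S → (EuclideanSpace ℝ (Fin n) × EuclideanSpace ℝ (Fin n) → ℝ)}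
    {z : EuclideanSpace ℝ (Fin n) × EuclideanSpace ℝ (Fin n)}
    (h : ∀ i : S, f i z = 0) (h2 : ∃ i j : S, poissonBracket (f i) (f j) z ≠ 0) :
    familyType f z = 2 := by
  obtain ⟨i, j, hij⟩ := h2
  exact le_antisymm (sInf_le ⟨i, [j], hij, by norm_num⟩) (familyType_ge_two h)

lemma familyType_char {n : ℕ} {S : Type*}
    {f : S → (EuclideanSpace ℝ (Fin n) × EuclideanSpace ℝ (Fin n) → ℝ)}
    {z : EuclideanSpace ℝ (Fin n) × EuclideanSpace ℝ (Fin n)}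
    (h : familyType f z ≤ 2) :
    (∃ i : S, f i z ≠ 0) ∨
      ((∀ i : S, f i z = 0) ∧ ∃ i j : S, poissonBracket (f i) (f j) z ≠ 0) := by
  by_cases h1 : ∃ i : S, f i z ≠ 0
  · exact Or.inl h1
  · push_neg at h1
    refine Or.inr ⟨h1, ?_⟩
    by_contra hb
    push_neg at hb
    have h3 : (3 : ℕ∞) ≤ familyType f z := by
      refine le_sInf ?_
      rintro m ⟨i, I, hI, rfl⟩
      match I with
      | [] => exact absurd (h1 i) hI
      | [j] => exact absurd (hb i j) hI
      | a :: b :: t =>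
          simp only [List.length_cons]
          exact_mod_cast by omega
    have : (3 : ℕ∞) ≤ 2 := h3.trans h
    norm_num at this

/-! ### Algebraic identity -/

lemma sum_swap4 {α : Type*} [AddCommMonoid α] {n m : ℕ}
    (F : Fin m → Fin m → Fin n → Fin n → α) :
    ∑ k : Fin n, ∑ s : Fin n, ∑ j : Fin m, ∑ i : Fin m, F j i k s
      = ∑ j : Fin m, ∑ i : Fin m, ∑ k : Fin n, ∑ s : Fin n, F j i k s := by
  calc ∑ k : Fin n, ∑ s : Fin n, ∑ j : Fin m, ∑ i : Fin m, F j i k s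
      = ∑ k : Fin n, ∑ j : Fin m, ∑ s : Fin n, ∑ i : Fin m, F j i k s :=
        Finset.sum_congr rfl fun k _ =>
          Finset.sum_comm (f := fun s j => ∑ i : Fin m, F j i k s)
    _ = ∑ j : Fin m, ∑ k : Fin n, ∑ s : Fin n, ∑ i : Fin m, F j i k s :=
        Finset.sum_comm (f := fun k j => ∑ s : Fin n, ∑ i : Fin m, F j i k s)
    _ = ∑ j : Fin m, ∑ k : Fin n, ∑ i : Fin m, ∑ s : Fin n, F j i k s :=
        Finset.sum_congr rfl fun j _ => Finset.sum_congr rfl fun k _ =>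
          Finset.sum_comm (f := fun s i => F j i k s)
    _ = ∑ j : Fin m, ∑ i : Fin m, ∑ k : Fin n, ∑ s : Fin n, F j i k s :=
        Finset.sum_congr rfl fun j _ =>
          Finset.sum_comm (f := fun k i => ∑ s : Fin n, F j i k s)

lemma helper_expand {ι κ : Type*} [Fintype ι] [Fintype κ] (c : ℝ) (f f' : ι → ℝ) (g g' : κ → ℝ) :
    (∑ j, f j) * (c * ∑ i, g i) - (∑ j, f' j) * (c * ∑ i, g' i)
      = ∑ j, ∑ i, (f j * (c * g i) - f' j * (c * g' i)) := by
  rw [Finset.sum_mul, Finset.sum_mul, ← Finset.sum_sub_distrib]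
  refine Finset.sum_congr rfl fun j _ => ?_
  rw [Finset.mul_sum, Finset.mul_sum, Finset.mul_sum, Finset.mul_sum, ← Finset.sum_sub_distrib]

lemma alg_identity {n m : ℕ} (u v : Fin m → Fin n → ℝ) (w : ℝ) :
    ∑ k : Fin n, ∑ s : Fin n,
      ((∑ j : Fin m, 2 * u j k * u j s) * (w * ∑ i : Fin m, 2 * v i k * v i s) -
        (∑ j : Fin m, 2 * u j k * v j s) * (w * ∑ i : Fin m, 2 * v i k * u i s))
    = 2 * w * ∑ i : Fin m, ∑ j : Fin m,
        (∑ s : Fin n, (u i s * v j s - v i s * u j s)) ^ 2 := by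
  set G : Fin m → Fin m → ℝ := fun j i => ∑ k : Fin n, u j k * v i k with hG
  have expand : ∀ k s : Fin n,
      ((∑ j : Fin m, 2 * u j k * u j s) * (w * ∑ i : Fin m, 2 * v i k * v i s) -
        (∑ j : Fin m, 2 * u j k * v j s) * (w * ∑ i : Fin m, 2 * v i k * u i s))
      = ∑ j : Fin m, ∑ i : Fin m,
          (4 * w) * ((u j k * v i k) * (u j s * v i s) - (u j k * v i k) * (v j s * u i s)) := by
    intro k s
    rw [helper_expand]
    exact Finset.sum_congr rfl fun j _ => Finset.sum_congr rfl fun i _ => by ring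
  have e1 : ∀ j i : Fin m,
      (∑ k : Fin n, ∑ s : Fin n,
        (4 * w) * ((u j k * v i k) * (u j s * v i s) - (u j k * v i k) * (v j s * u i s)))
      = (4 * w) * (G j i * G j i - G j i * G i j) := by
    intro j i
    have hGij : G i j = ∑ s : Fin n, v j s * u i s := by
      simp only [hG]
      exact Finset.sum_congr rfl fun s _ => mul_comm _ _
    have h2 : (4 * w) * (G j i * G j i - G j i * G i j)
        = (∑ k : Fin n, u j k * v i k) * ((4 * w) * ∑ s : Fin n, u j s * v i s)
          - (∑ k : Fin n, u j k * v i k) * ((4 * w) * ∑ s : Fin n, v j s * u i s) := by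
      rw [hGij]
      simp only [hG]
      ring
    rw [h2, helper_expand]
    exact Finset.sum_congr rfl fun k _ => Finset.sum_congr rfl fun s _ => by ring
  have e3 : ∀ i j : Fin m,
      (∑ s : Fin n, (u i s * v j s - v i s * u j s)) ^ 2
      = G i j * G i j - 2 * (G i j * G j i) + G j i * G j i := by
    intro i j
    have h4 : (∑ s : Fin n, (u i s * v j s - v i s * u j s)) = G i j - G j i := by
      rw [Finset.sum_sub_distrib]
      simp only [hG]
      congr 1
      exact Finset.sum_congr rfl fun s _ => mul_comm _ _
    rw [h4]; ring
  calc ∑ k : Fin n, ∑ s : Fin n,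
      ((∑ j : Fin m, 2 * u j k * u j s) * (w * ∑ i : Fin m, 2 * v i k * v i s) -
        (∑ j : Fin m, 2 * u j k * v j s) * (w * ∑ i : Fin m, 2 * v i k * u i s))
      = ∑ k : Fin n, ∑ s : Fin n, ∑ j : Fin m, ∑ i : Fin m,
          (4 * w) * ((u j k * v i k) * (u j s * v i s) - (u j k * v i k) * (v j s * u i s)) :=
        Finset.sum_congr rfl fun k _ => Finset.sum_congr rfl fun s _ => expand k s
    _ = ∑ j : Fin m, ∑ i : Fin m, ∑ k : Fin n, ∑ s : Fin n,
          (4 * w) * ((u j k * v i k) * (u j s * v i s) - (u j k * v i k) * (v j s * u i s)) :=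
        sum_swap4 _
    _ = ∑ j : Fin m, ∑ i : Fin m, (4 * w) * (G j i * G j i - G j i * G i j) :=
        Finset.sum_congr rfl fun j _ => Finset.sum_congr rfl fun i _ => e1 j i
    _ = (4 * w) * (∑ j : Fin m, ∑ i : Fin m, G j i * G j i)
          - (4 * w) * (∑ j : Fin m, ∑ i : Fin m, G j i * G i j) := by
        rw [Finset.mul_sum, Finset.mul_sum, ← Finset.sum_sub_distrib]
        refine Finset.sum_congr rfl fun j _ => ?_
        rw [Finset.mul_sum, Finset.mul_sum, ← Finset.sum_sub_distrib]
        exact Finset.sum_congr rfl fun i _ => by ring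
    _ = 2 * w * ∑ i : Fin m, ∑ j : Fin m,
        (∑ s : Fin n, (u i s * v j s - v i s * u j s)) ^ 2 := by
        have hsplit : ∑ i : Fin m, ∑ j : Fin m,
            (∑ s : Fin n, (u i s * v j s - v i s * u j s)) ^ 2
            = (∑ i : Fin m, ∑ j : Fin m, G i j * G i j)
              - 2 * (∑ i : Fin m, ∑ j : Fin m, G i j * G j i)
              + (∑ i : Fin m, ∑ j : Fin m, G j i * G j i) := by
          rw [show (∑ i : Fin m, ∑ j : Fin m,
              (∑ s : Fin n, (u i s * v j s - v i s * u j s)) ^ 2)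
              = ∑ i : Fin m, ∑ j : Fin m,
                (G i j * G i j - 2 * (G i j * G j i) + G j i * G j i) from
            Finset.sum_congr rfl fun i _ => Finset.sum_congr rfl fun j _ => e3 i j]
          rw [Finset.mul_sum, ← Finset.sum_sub_distrib, ← Finset.sum_add_distrib]
          refine Finset.sum_congr rfl fun i _ => ?_
          rw [Finset.mul_sum, ← Finset.sum_sub_distrib, ← Finset.sum_add_distrib]
        rw [hsplit]
        have hA : (∑ i : Fin m, ∑ j : Fin m, G j i * G j i)
            = ∑ i : Fin m, ∑ j : Fin m, G i j * G i j :=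
          Finset.sum_comm (f := fun i j => G j i * G j i)
        rw [hA]
        ring

/-! ### Derivatives of first-order symbols -/

/-- The derivative of a function `z ↦ ∑ ℓ, c ℓ z.1 * z.2 ℓ`. -/
noncomputable def XDeriv {n : ℕ} (c : Fin n → EuclideanSpace ℝ (Fin n) → ℝ)
    (z : EuclideanSpace ℝ (Fin n) × EuclideanSpace ℝ (Fin n)) :
    (EuclideanSpace ℝ (Fin n) × EuclideanSpace ℝ (Fin n)) →L[ℝ] ℝ :=
  ∑ ℓ : Fin n,
    ((c ℓ z.1) • ((EuclideanSpace.proj ℓ).comp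
        (ContinuousLinearMap.snd ℝ (EuclideanSpace ℝ (Fin n)) (EuclideanSpace ℝ (Fin n))))
      + (z.2 ℓ) • ((fderiv ℝ (c ℓ) z.1).comp
        (ContinuousLinearMap.fst ℝ (EuclideanSpace ℝ (Fin n)) (EuclideanSpace ℝ (Fin n)))))

lemma hasFDerivAt_Xtype {n : ℕ} (c : Fin n → EuclideanSpace ℝ (Fin n) → ℝ)
    (z : EuclideanSpace ℝ (Fin n) × EuclideanSpace ℝ (Fin n))
    (hc : ∀ ℓ, DifferentiableAt ℝ (c ℓ) z.1) :
    HasFDerivAt (fun w : EuclideanSpace ℝ (Fin n) × EuclideanSpace ℝ (Fin n) =>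
      ∑ ℓ : Fin n, c ℓ w.1 * w.2 ℓ) (XDeriv c z) z := by
  unfold XDeriv
  apply HasFDerivAt.fun_sum
  intro ℓ _
  have h1 : HasFDerivAt (fun w : EuclideanSpace ℝ (Fin n) × EuclideanSpace ℝ (Fin n) => c ℓ w.1)
      ((fderiv ℝ (c ℓ) z.1).comp
        (ContinuousLinearMap.fst ℝ (EuclideanSpace ℝ (Fin n)) (EuclideanSpace ℝ (Fin n)))) z :=
    (hc ℓ).hasFDerivAt.comp z (hasFDerivAt_fst)
  have h2 : HasFDerivAt (fun w : EuclideanSpace ℝ (Fin n) × EuclideanSpace ℝ (Fin n) => w.2 ℓ)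
      ((EuclideanSpace.proj ℓ).comp
        (ContinuousLinearMap.snd ℝ (EuclideanSpace ℝ (Fin n)) (EuclideanSpace ℝ (Fin n)))) z :=
    ((EuclideanSpace.proj ℓ).comp
        (ContinuousLinearMap.snd ℝ (EuclideanSpace ℝ (Fin n))
          (EuclideanSpace ℝ (Fin n)))).hasFDerivAt
  exact h1.mul h2

lemma XDeriv_apply {n : ℕ} (c : Fin n → EuclideanSpace ℝ (Fin n) → ℝ)
    (z v : EuclideanSpace ℝ (Fin n) × EuclideanSpace ℝ (Fin n)) :
    XDeriv c z v = ∑ ℓ : Fin n, (c ℓ z.1 * v.2 ℓ + z.2 ℓ * fderiv ℝ (c ℓ) z.1 v.1) := by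
  unfold XDeriv
  simp [ContinuousLinearMap.sum_apply, ContinuousLinearMap.add_apply,
    ContinuousLinearMap.smul_apply, ContinuousLinearMap.comp_apply,
    ContinuousLinearMap.coe_fst', ContinuousLinearMap.coe_snd', smul_eq_mul]

lemma XDeriv_apply_snd {n : ℕ} (c : Fin n → EuclideanSpace ℝ (Fin n) → ℝ)
    (z : EuclideanSpace ℝ (Fin n) × EuclideanSpace ℝ (Fin n)) (k : Fin n) :
    XDeriv c z (0, EuclideanSpace.single k 1) = c k z.1 := by
  rw [XDeriv_apply]
  simp [EuclideanSpace.single_apply]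

/-- `∂_{x_s}` of the symbol with coefficients `a · j`. -/
noncomputable def Yfun {n m : ℕ} (a : Fin n → Fin m → EuclideanSpace ℝ (Fin n) → ℝ)
    (j : Fin m) (s : Fin n)
    (z : EuclideanSpace ℝ (Fin n) × EuclideanSpace ℝ (Fin n)) : ℝ :=
  ∑ ℓ : Fin n, z.2 ℓ * fderiv ℝ (a ℓ j) z.1 (EuclideanSpace.single s 1)

lemma XDeriv_apply_fst {n m : ℕ} (a : Fin n → Fin m → EuclideanSpace ℝ (Fin n) → ℝ) (j : Fin m)
    (z : EuclideanSpace ℝ (Fin n) × EuclideanSpace ℝ (Fin n)) (s : Fin n) :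
    XDeriv (fun ℓ => a ℓ j) z (EuclideanSpace.single s 1, 0) = Yfun a j s z := by
  rw [XDeriv_apply]
  unfold Yfun
  simp

lemma Yfun_differentiableAt {n m : ℕ} (a : Fin n → Fin m → EuclideanSpace ℝ (Fin n) → ℝ)
    (ha : ∀ ℓ j, ContDiff ℝ (⊤ : ℕ∞) (a ℓ j)) (j : Fin m) (s : Fin n)
    (z : EuclideanSpace ℝ (Fin n) × EuclideanSpace ℝ (Fin n)) :
    DifferentiableAt ℝ (Yfun a j s) z := by
  unfold Yfun
  apply DifferentiableAt.fun_sum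
  intro ℓ _
  refine DifferentiableAt.mul ?_ ?_
  · exact ((EuclideanSpace.proj ℓ).comp
      (ContinuousLinearMap.snd ℝ (EuclideanSpace ℝ (Fin n))
        (EuclideanSpace ℝ (Fin n)))).differentiableAt
  · have hb : Differentiable ℝ
        (fun y : EuclideanSpace ℝ (Fin n) => fderiv ℝ (a ℓ j) y (EuclideanSpace.single s 1)) :=
      (((ha ℓ j).fderiv_right (m := 1) (WithTop.coe_le_coe.mpr le_top)).differentiable one_ne_zero).clm_apply (differentiable_const _)
    exact (hb z.1).comp z differentiableAt_fst

lemma hasFDerivAt_sum_sq {E' : Type*} [NormedAddCommGroup E'] [NormedSpace ℝ E'] {m : ℕ}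
    (X : Fin m → E' → ℝ) (D : Fin m → E' →L[ℝ] ℝ) (z : E')
    (h : ∀ j, HasFDerivAt (X j) (D j) z) :
    HasFDerivAt (fun w => ∑ j : Fin m, X j w ^ 2) (∑ j : Fin m, (2 * X j z) • D j) z := by
  apply HasFDerivAt.fun_sum
  intro j _
  have hfun : (fun w => X j w ^ 2) = fun w => X j w * X j w := by funext w; ring
  have e : (2 * X j z) • D j = X j z • D j + X j z • D j := by rw [two_mul, add_smul]
  rw [hfun, e]
  exact (h j).mul (h j)

/-! ### Main theorem -/

/-- For a sum of squares of first-order symbols `X_j(x,ξ) = ∑ₗ ãₗⱼ(x)ξₗ`, with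
`p⁰ = ∑ⱼ Xⱼ²`, `pᵏ = ∂_{ξ_k} p⁰` and `p^{n+k} = (1+‖ξ‖²)^{1/2} ∂_{x_k} p⁰`, if
`ξ ≠ 0` and `τ((x,ξ); X) ≤ 2` then `τ((x,ξ); X) = τ((x,ξ); 𝒫)`. -/
theorem type_X_eq_type_P_of_le_two
    (n m : ℕ) (a : Fin n → Fin m → EuclideanSpace ℝ (Fin n) → ℝ)
    (ha : ∀ ℓ j, ContDiff ℝ (⊤ : ℕ∞) (a ℓ j))
    (X : Fin m → (EuclideanSpace ℝ (Fin n) × EuclideanSpace ℝ (Fin n) → ℝ))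
    (hX : ∀ j z, X j z = ∑ ℓ : Fin n, a ℓ j z.1 * z.2 ℓ)
    (p0 : EuclideanSpace ℝ (Fin n) × EuclideanSpace ℝ (Fin n) → ℝ)
    (hp0 : ∀ z, p0 z = ∑ j : Fin m, (X j z) ^ 2)
    (P : Fin n ⊕ Fin n → (EuclideanSpace ℝ (Fin n) × EuclideanSpace ℝ (Fin n) → ℝ))
    (hPξ : ∀ k z, P (Sum.inl k) z = fderiv ℝ p0 z (0, EuclideanSpace.single k 1))
    (hPx : ∀ k z, P (Sum.inr k) z =
      Real.sqrt (1 + ‖z.2‖ ^ 2) * fderiv ℝ p0 z (EuclideanSpace.single k 1, 0)) :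
    ∀ (x ξ : EuclideanSpace ℝ (Fin n)), ξ ≠ 0 →
      familyType X (x, ξ) ≤ (2 : ℕ∞) →
      familyType X (x, ξ) = familyType P (x, ξ) := by
  intro x ξ hξ hle
  classical
  -- basic differentiability facts
  have haD : ∀ (ℓ : Fin n) (j : Fin m) (y : EuclideanSpace ℝ (Fin n)),
      DifferentiableAt ℝ (a ℓ j) y := fun ℓ j y => ((ha ℓ j).differentiable (by simp)).differentiableAt
  have hXfun : ∀ j, X j = fun w : EuclideanSpace ℝ (Fin n) × EuclideanSpace ℝ (Fin n) =>
      ∑ ℓ : Fin n, a ℓ j w.1 * w.2 ℓ := fun j => funext fun w => hX j w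
  have hDX : ∀ (j : Fin m) (z : EuclideanSpace ℝ (Fin n) × EuclideanSpace ℝ (Fin n)),
      HasFDerivAt (X j) (XDeriv (fun ℓ => a ℓ j) z) z := by
    intro j z
    rw [hXfun j]
    exact hasFDerivAt_Xtype _ z (fun ℓ => haD ℓ j z.1)
  have hp0fun : p0 = fun w => ∑ j : Fin m, X j w ^ 2 := funext hp0
  have hDp0 : ∀ z : EuclideanSpace ℝ (Fin n) × EuclideanSpace ℝ (Fin n),
      HasFDerivAt p0 (∑ j : Fin m, (2 * X j z) • XDeriv (fun ℓ => a ℓ j) z) z := by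
    intro z
    rw [hp0fun]
    exact hasFDerivAt_sum_sq X _ z (fun j => hDX j z)
  -- explicit formulas for the family P
  have hPinl : ∀ (k : Fin n) (z : EuclideanSpace ℝ (Fin n) × EuclideanSpace ℝ (Fin n)),
      P (Sum.inl k) z = ∑ j : Fin m, 2 * X j z * a k j z.1 := by
    intro k z
    rw [hPξ, (hDp0 z).fderiv]
    simp only [ContinuousLinearMap.coe_sum', Finset.sum_apply, ContinuousLinearMap.smul_apply,
      XDeriv_apply_snd, smul_eq_mul]
  have hPinr : ∀ (l : Fin n) (z : EuclideanSpace ℝ (Fin n) × EuclideanSpace ℝ (Fin n)),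
      P (Sum.inr l) z = Real.sqrt (1 + ‖z.2‖ ^ 2) * ∑ j : Fin m, 2 * X j z * Yfun a j l z := by
    intro l z
    rw [hPx, (hDp0 z).fderiv]
    congr 1
    simp only [ContinuousLinearMap.coe_sum', Finset.sum_apply, ContinuousLinearMap.smul_apply,
      XDeriv_apply_fst, smul_eq_mul]
  rcases familyType_char hle with h1 | ⟨hX0, i₀, j₀, hbr⟩
  · -- Case τ(X) = 1
    obtain ⟨jw, hjw⟩ := h1
    have hp0pos : 0 < p0 (x, ξ) := by
      rw [hp0]
      exact Finset.sum_pos' (fun j _ => sq_nonneg _)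
        ⟨jw, Finset.mem_univ _, by positivity⟩
    have key : ∑ k : Fin n, ξ k * P (Sum.inl k) (x, ξ) = 2 * p0 (x, ξ) := by
      have hX' : ∀ j, X j (x, ξ) = ∑ k : Fin n, a k j x * ξ k := fun j => hX j (x, ξ)
      calc ∑ k : Fin n, ξ k * P (Sum.inl k) (x, ξ)
          = ∑ k : Fin n, ∑ j : Fin m, ξ k * (2 * X j (x, ξ) * a k j x) := by
            refine Finset.sum_congr rfl fun k _ => ?_
            rw [show P (Sum.inl k) (x, ξ) = ∑ j : Fin m, 2 * X j (x, ξ) * a k j x from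
              hPinl k (x, ξ), Finset.mul_sum]
        _ = ∑ j : Fin m, ∑ k : Fin n, ξ k * (2 * X j (x, ξ) * a k j x) :=
            Finset.sum_comm (f := fun k j => ξ k * (2 * X j (x, ξ) * a k j x))
        _ = ∑ j : Fin m, 2 * (X j (x, ξ) * X j (x, ξ)) := by
            refine Finset.sum_congr rfl fun j _ => ?_
            have h5 : ∑ k : Fin n, ξ k * (2 * X j (x, ξ) * a k j x)
                = 2 * (X j (x, ξ) * ∑ k : Fin n, a k j x * ξ k) := by
              rw [Finset.mul_sum, Finset.mul_sum]
              exact Finset.sum_congr rfl fun k _ => by ring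
            rw [h5, ← hX' j]
        _ = 2 * p0 (x, ξ) := by
            rw [hp0, Finset.mul_sum]
            exact Finset.sum_congr rfl fun j _ => by ring
    have hPex : ∃ i : Fin n ⊕ Fin n, P i (x, ξ) ≠ 0 := by
      by_contra hc
      push_neg at hc
      have : ∑ k : Fin n, ξ k * P (Sum.inl k) (x, ξ) = 0 :=
        Finset.sum_eq_zero fun k _ => by rw [hc (Sum.inl k), mul_zero]
      rw [key] at this
      nlinarith
    rw [familyType_eq_one ⟨jw, hjw⟩, familyType_eq_one hPex]
  · -- Case τ(X) = 2
    have hτX : familyType X (x, ξ) = 2 := familyType_eq_two hX0 ⟨i₀, j₀, hbr⟩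
    -- All members of P vanish at (x, ξ)
    have hPzero : ∀ b : Fin n ⊕ Fin n, P b (x, ξ) = 0 := by
      intro b
      cases b with
      | inl k =>
          rw [hPinl]
          exact Finset.sum_eq_zero fun j _ => by rw [hX0 j]; ring
      | inr l =>
          rw [hPinr]
          rw [Finset.sum_eq_zero fun j _ => by rw [hX0 j]; ring, mul_zero]
    -- bracket formula for the X family
    have hpbX : ∀ i j : Fin m, poissonBracket (X i) (X j) (x, ξ)
        = ∑ s : Fin n, (a s i x * Yfun a j s (x, ξ) - Yfun a i s (x, ξ) * a s j x) := by
      intro i j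
      unfold poissonBracket
      rw [(hDX i (x, ξ)).fderiv, (hDX j (x, ξ)).fderiv]
      refine Finset.sum_congr rfl fun s _ => ?_
      rw [XDeriv_apply_snd, XDeriv_apply_snd, XDeriv_apply_fst a i, XDeriv_apply_fst a j]
    -- derivatives of P at (x, ξ)
    have hA : ∀ k : Fin n, HasFDerivAt (P (Sum.inl k))
        (∑ j : Fin m, (2 * a k j x) • XDeriv (fun ℓ => a ℓ j) (x, ξ)) (x, ξ) := by
      intro k
      rw [show P (Sum.inl k) = fun z => ∑ j : Fin m, 2 * X j z * a k j z.1 from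
        funext (hPinl k)]
      have hterm : ∀ j : Fin m, HasFDerivAt
          (fun z : EuclideanSpace ℝ (Fin n) × EuclideanSpace ℝ (Fin n) => 2 * X j z * a k j z.1)
          ((2 * a k j x) • XDeriv (fun ℓ => a ℓ j) (x, ξ)) (x, ξ) := by
        intro j
        have h1 : HasFDerivAt
            (fun z : EuclideanSpace ℝ (Fin n) × EuclideanSpace ℝ (Fin n) => a k j z.1)
            ((fderiv ℝ (a k j) x).comp
              (ContinuousLinearMap.fst ℝ (EuclideanSpace ℝ (Fin n)) (EuclideanSpace ℝ (Fin n))))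
            (x, ξ) :=
          (haD k j x).hasFDerivAt.comp (x, ξ) hasFDerivAt_fst
        have h2 := ((hDX j (x, ξ)).fun_mul h1).const_mul (2 : ℝ)
        have hf : (fun z : EuclideanSpace ℝ (Fin n) × EuclideanSpace ℝ (Fin n) =>
            2 * (X j z * a k j z.1)) = fun z => 2 * X j z * a k j z.1 := by
          funext z; ring
        rw [hf] at h2
        refine h2.congr_fderiv ?_
        rw [hX0 j, zero_smul, zero_add, smul_smul]
      exact HasFDerivAt.fun_sum fun j _ => hterm j
    have hB : ∀ l : Fin n, HasFDerivAt (P (Sum.inr l))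
        (Real.sqrt (1 + ‖ξ‖ ^ 2) •
          ∑ j : Fin m, (2 * Yfun a j l (x, ξ)) • XDeriv (fun ℓ => a ℓ j) (x, ξ)) (x, ξ) := by
      intro l
      rw [show P (Sum.inr l)
          = fun z => Real.sqrt (1 + ‖z.2‖ ^ 2) * ∑ j : Fin m, 2 * X j z * Yfun a j l z from
        funext (hPinr l)]
      have hg : HasFDerivAt
          (fun z : EuclideanSpace ℝ (Fin n) × EuclideanSpace ℝ (Fin n) =>
            ∑ j : Fin m, 2 * X j z * Yfun a j l z)
          (∑ j : Fin m, (2 * Yfun a j l (x, ξ)) • XDeriv (fun ℓ => a ℓ j) (x, ξ)) (x, ξ) := by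
        refine HasFDerivAt.fun_sum fun j _ => ?_
        have h1 := (Yfun_differentiableAt a ha j l (x, ξ)).hasFDerivAt
        have h2 := ((hDX j (x, ξ)).fun_mul h1).const_mul (2 : ℝ)
        have hf : (fun z : EuclideanSpace ℝ (Fin n) × EuclideanSpace ℝ (Fin n) =>
            2 * (X j z * Yfun a j l z)) = fun z => 2 * X j z * Yfun a j l z := by
          funext z; ring
        rw [hf] at h2
        refine h2.congr_fderiv ?_
        rw [hX0 j, zero_smul, zero_add, smul_smul]
      have hw : DifferentiableAt ℝ
          (fun z : EuclideanSpace ℝ (Fin n) × EuclideanSpace ℝ (Fin n) =>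
            Real.sqrt (1 + ‖z.2‖ ^ 2)) (x, ξ) := by
        have h0 : DifferentiableAt ℝ
            (fun z : EuclideanSpace ℝ (Fin n) × EuclideanSpace ℝ (Fin n) => 1 + ‖z.2‖ ^ 2)
            (x, ξ) := by
          have hn : Differentiable ℝ (fun y : EuclideanSpace ℝ (Fin n) => ‖y‖ ^ 2) :=
            (contDiff_norm_sq ℝ (n := 1)).differentiable one_ne_zero
          exact (differentiableAt_const (1 : ℝ)).add (by have := (hn ξ).comp (x, ξ) (differentiableAt_snd (𝕜 := ℝ) (p := (x, ξ))); exact this)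
        exact h0.sqrt (by positivity)
      have h3 := hw.hasFDerivAt.mul hg
      have hg0 : (∑ j : Fin m, 2 * X j (x, ξ) * Yfun a j l (x, ξ)) = 0 :=
        Finset.sum_eq_zero fun j _ => by rw [hX0 j]; ring
      rw [hg0, zero_smul, add_zero] at h3
      exact h3
    -- value of the Poisson brackets of P at (x, ξ)
    have hpbP : ∀ k : Fin n, poissonBracket (P (Sum.inl k)) (P (Sum.inr k)) (x, ξ)
        = ∑ s : Fin n,
          ((∑ j : Fin m, 2 * a k j x * a s j x) *
              (Real.sqrt (1 + ‖ξ‖ ^ 2) * ∑ i : Fin m, 2 * Yfun a i k (x, ξ) * Yfun a i s (x, ξ)) -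
            (∑ j : Fin m, 2 * a k j x * Yfun a j s (x, ξ)) *
              (Real.sqrt (1 + ‖ξ‖ ^ 2) * ∑ i : Fin m, 2 * Yfun a i k (x, ξ) * a s i x)) := by
      intro k
      unfold poissonBracket
      rw [(hA k).fderiv, (hB k).fderiv]
      refine Finset.sum_congr rfl fun s _ => ?_
      simp only [ContinuousLinearMap.smul_apply, ContinuousLinearMap.coe_sum',
        Finset.sum_apply, XDeriv_apply_snd, XDeriv_apply_fst, smul_eq_mul]
    -- the sum over k of the brackets is positive
    have hsum : ∑ k : Fin n, poissonBracket (P (Sum.inl k)) (P (Sum.inr k)) (x, ξ)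
        = 2 * Real.sqrt (1 + ‖ξ‖ ^ 2) * ∑ i : Fin m, ∑ j : Fin m,
            (poissonBracket (X i) (X j) (x, ξ)) ^ 2 := by
      calc ∑ k : Fin n, poissonBracket (P (Sum.inl k)) (P (Sum.inr k)) (x, ξ)
          = ∑ k : Fin n, ∑ s : Fin n,
            ((∑ j : Fin m, 2 * a k j x * a s j x) *
                (Real.sqrt (1 + ‖ξ‖ ^ 2) *
                  ∑ i : Fin m, 2 * Yfun a i k (x, ξ) * Yfun a i s (x, ξ)) -
              (∑ j : Fin m, 2 * a k j x * Yfun a j s (x, ξ)) *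
                (Real.sqrt (1 + ‖ξ‖ ^ 2) * ∑ i : Fin m, 2 * Yfun a i k (x, ξ) * a s i x)) :=
            Finset.sum_congr rfl fun k _ => hpbP k
        _ = 2 * Real.sqrt (1 + ‖ξ‖ ^ 2) * ∑ i : Fin m, ∑ j : Fin m,
              (∑ s : Fin n,
                (a s i x * Yfun a j s (x, ξ) - Yfun a i s (x, ξ) * a s j x)) ^ 2 :=
            alg_identity (fun j s => a s j x) (fun j s => Yfun a j s (x, ξ)) _
        _ = 2 * Real.sqrt (1 + ‖ξ‖ ^ 2) * ∑ i : Fin m, ∑ j : Fin m,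
              (poissonBracket (X i) (X j) (x, ξ)) ^ 2 := by
            congr 1
            exact Finset.sum_congr rfl fun i _ => Finset.sum_congr rfl fun j _ => by
              rw [hpbX i j]
    have hpos : 0 < ∑ k : Fin n, poissonBracket (P (Sum.inl k)) (P (Sum.inr k)) (x, ξ) := by
      rw [hsum]
      have h2 : 0 < ∑ i : Fin m, ∑ j : Fin m, (poissonBracket (X i) (X j) (x, ξ)) ^ 2 :=
        Finset.sum_pos' (fun i _ => Finset.sum_nonneg fun j _ => sq_nonneg _)
          ⟨i₀, Finset.mem_univ _, Finset.sum_pos' (fun j _ => sq_nonneg _)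
            ⟨j₀, Finset.mem_univ _,
              lt_of_le_of_ne (sq_nonneg _) (Ne.symm (pow_ne_zero 2 hbr))⟩⟩
      have hW : 0 < Real.sqrt (1 + ‖ξ‖ ^ 2) := Real.sqrt_pos.mpr (by positivity)
      exact mul_pos (mul_pos two_pos hW) h2
    have hPex2 : ∃ k : Fin n, poissonBracket (P (Sum.inl k)) (P (Sum.inr k)) (x, ξ) ≠ 0 := by
      by_contra hc
      push_neg at hc
      rw [Finset.sum_eq_zero fun k _ => hc k] at hpos
      exact lt_irrefl 0 hpos
    obtain ⟨k, hk⟩ := hPex2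
    rw [hτX, familyType_eq_two hPzero ⟨Sum.inl k, Sum.inr k, hk⟩]
end
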